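/- Let T be a traversal tree (DFS or BFS) of a temporal graph G rooted at source s with starting time t_s, satisfying: (i) every root-to-node path in T is a temporal path in G with all edge times ≥ t_s, and (ii) whenever a node occurrence u in T has visit time σ(u) and (u,w,t) ∈ E with t ≥ σ(u), some occurrence of w appears in T with visit time ≤ t. Then the set of distinct vertices appearing in T equals the set of vertices reachable from s in G starting at time t_s. -/

import Mathlib

/-- Consecutive temporal edges: the head of the first equals the tail of the
second, and times are nondecreasing. -/
def tstep {V : Type*} (e f : V × V × ℕ) : Prop := e.2.1 = f.1 ∧ e.2.2 ≤ f.2.2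

/-- A temporal path in a temporal graph with edge set `E`: a list of temporal
edges, all in `E`, with matching consecutive vertices and nondecreasing times. -/
def IsTPath {V : Type*} (E : Set (V × V × ℕ)) (P : List (V × V × ℕ)) : Prop :=
  (∀ e ∈ P, e ∈ E) ∧ P.Chain' tstep

/-- Temporal reachability starting at time `ts`. -/
def Reaches {V : Type*} (E : Set (V × V × ℕ)) (ts : ℕ) (u v : V) : Prop :=
  u = v ∨ ∃ (P : List (V × V × ℕ)) (hne : P ≠ []), IsTPath E P ∧
    (P.head hne).1 = u ∧ (P.getLast hne).2.1 = v ∧ ts ≤ (P.head hne).2.2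

/-!
Tree nodes are reachable: following parent pointers from a node up to the root, condition (i)
assembles the tree path into a temporal path from `s` arriving at the node's visit time.
Conversely, by (ii) the predicate "some occurrence of `v` is visited by time `τ`" is preserved
along every edge `(v, w, t)` with `τ ≤ t`, and it holds for `(s, ts)` at the root; induction
along a temporal path from `s` then puts its endpoint in the tree.
-/

section

variable {V : Type*} {E : Set (V × V × ℕ)} {ts : ℕ} {s : V}

def ReachesAt (E : Set (V × V × ℕ)) (ts : ℕ) (s v : V) (t : ℕ) : Prop :=
  ∃ (P : List (V × V × ℕ)) (hne : P ≠ []), IsTPath E P ∧ (P.head hne).1 = s ∧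
    (P.getLast hne).2.1 = v ∧ ts ≤ (P.head hne).2.2 ∧ (P.getLast hne).2.2 = t

theorem reaches_iff_eq_or_exists_reachesAt {v : V} :
    Reaches E ts s v ↔ s = v ∨ ∃ t, ReachesAt E ts s v t :=
  or_congr_right ⟨fun ⟨P, hne, hP, hs, hv, hts⟩ => ⟨_, P, hne, hP, hs, hv, hts, rfl⟩,
    fun ⟨_, P, hne, hP, hs, hv, hts, _⟩ => ⟨P, hne, hP, hs, hv, hts⟩⟩

theorem reachesAt_of_mem {w : V} {t : ℕ} (he : (s, w, t) ∈ E) (ht : ts ≤ t) :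
    ReachesAt E ts s w t :=
  ⟨[(s, w, t)], List.cons_ne_nil _ _, ⟨by simpa using he, List.isChain_singleton _⟩,
    rfl, rfl, ht, rfl⟩

theorem ReachesAt.snoc {v w : V} {t t' : ℕ} (h : ReachesAt E ts s v t)
    (he : (v, w, t') ∈ E) (ht : t ≤ t') : ReachesAt E ts s w t' := by
  obtain ⟨P, hne, ⟨hPE, hPc⟩, hs, hv, hts, hlast⟩ := h
  refine ⟨P ++ [(v, w, t')], by simp, ⟨?_, hPc.append (List.isChain_singleton _) ?_⟩,
    ?_, by simp, ?_, by simp⟩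
  · intro e he'
    rcases List.mem_append.1 he' with h | h
    exacts [hPE e h, List.mem_singleton.1 h ▸ he]
  · simp [List.getLast?_eq_some_getLast hne, tstep, hv, hlast, ht]
  · rwa [List.head_append_of_ne_nil hne]
  · rwa [List.head_append_of_ne_nil hne]

theorem IsTPath.induction {Q : V → ℕ → Prop}
    (hQ : ∀ u w t τ, Q u τ → τ ≤ t → (u, w, t) ∈ E → Q w t) :
    ∀ {P : List (V × V × ℕ)} (hne : P ≠ []), IsTPath E P →
      Q (P.head hne).2.1 (P.head hne).2.2 → Q (P.getLast hne).2.1 (P.getLast hne).2.2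
  | [_], _, _, he => he
  | e :: f :: P, _, ⟨hPE, hPc⟩, he => by
    obtain ⟨⟨hef, het⟩, hPc⟩ := List.isChain_cons_cons.1 hPc
    refine IsTPath.induction hQ (List.cons_ne_nil f P)
      ⟨fun g hg => hPE g (List.mem_cons_of_mem _ hg), hPc⟩ ?_
    exact hQ f.1 f.2.1 f.2.2 e.2.2 (hef ▸ he) het (hPE f (by simp))

theorem ReachesAt.induction {Q : V → ℕ → Prop}
    (hQ : ∀ u w t τ, Q u τ → τ ≤ t → (u, w, t) ∈ E → Q w t) (hs : Q s ts)
    {v : V} {t : ℕ} (h : ReachesAt E ts s v t) : Q v t := by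
  obtain ⟨P, hne, hP, hhead, rfl, hts, rfl⟩ := h
  have hfirst := hP.1 _ (List.head_mem hne)
  exact hP.induction hQ hne (hQ _ _ _ ts (hhead ▸ hs) hts hfirst)

theorem eq_or_reachesAt_of_iterate_eq_root {N : Type*} {root : N} {vert : N → V} {σ : N → ℕ}
    {p : N → N} (hvroot : vert root = s)
    (hi : ∀ n : N, n ≠ root → (vert (p n), vert n, σ n) ∈ E ∧ ts ≤ σ n ∧ σ (p n) ≤ σ n)
    (k : ℕ) : ∀ n, p^[k] n = root → s = vert n ∨ ReachesAt E ts s (vert n) (σ n) := by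
  induction k with
  | zero => rintro n rfl; exact .inl hvroot.symm
  | succ k ih =>
    intro n hk
    by_cases hn : n = root
    · exact .inl (hn ▸ hvroot.symm)
    obtain ⟨he, hts, hσ⟩ := hi n hn
    right
    rcases ih (p n) hk with hpn | hpn
    · exact reachesAt_of_mem (hpn ▸ he) hts
    · exact hpn.snoc he hσ

end

theorem stmt9_general {V : Type*} (E : Set (V × V × ℕ)) (s : V) (ts : ℕ)
    (N : Type*) (root : N) (vert : N → V) (σ : N → ℕ) (p : N → N)
    (hvroot : vert root = s) (hσroot : σ root = ts)
    (hwf : ∀ n : N, ∃ k : ℕ, p^[k] n = root)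
    (hi : ∀ n : N, n ≠ root →
      (vert (p n), vert n, σ n) ∈ E ∧ ts ≤ σ n ∧ σ (p n) ≤ σ n)
    (hii : ∀ (n : N) (w : V) (t : ℕ), (vert n, w, t) ∈ E → σ n ≤ t →
      ∃ m : N, vert m = w ∧ σ m ≤ t) :
    {v : V | ∃ n : N, vert n = v} = {v : V | Reaches E ts s v} := by
  ext v
  simp only [Set.mem_ofPred_eq, reaches_iff_eq_or_exists_reachesAt]
  constructor
  · rintro ⟨n, rfl⟩
    obtain ⟨k, hk⟩ := hwf n
    exact (eq_or_reachesAt_of_iterate_eq_root hvroot hi k n hk).imp_right fun h => ⟨_, h⟩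
  · rintro (rfl | ⟨t, h⟩)
    · exact ⟨root, hvroot⟩
    obtain ⟨m, hm, -⟩ := h.induction (Q := fun v τ => ∃ m, vert m = v ∧ σ m ≤ τ)
      (fun _ w t _ ⟨m, hm, hmτ⟩ hτ he => hii m w t (hm ▸ he) (hmτ.trans hτ))
      ⟨root, hvroot, hσroot.le⟩
    exact ⟨m, hm⟩

theorem stmt9 {V : Type*} (E : Set (V × V × ℕ)) (s : V) (ts : ℕ)
    (N : Type*) (root : N) (vert : N → V) (σ : N → ℕ) (p : N → N)
    (hproot : p root = root) (hvroot : vert root = s) (hσroot : σ root = ts)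
    (hwf : ∀ n : N, ∃ k : ℕ, p^[k] n = root)
    (hi : ∀ n : N, n ≠ root →
      (vert (p n), vert n, σ n) ∈ E ∧ ts ≤ σ n ∧ σ (p n) ≤ σ n)
    (hii : ∀ (n : N) (w : V) (t : ℕ), (vert n, w, t) ∈ E → σ n ≤ t →
      ∃ m : N, vert m = w ∧ σ m ≤ t) :
    {v : V | ∃ n : N, vert n = v} = {v : V | Reaches E ts s v} :=
  stmt9_general E s ts N root vert σ p hvroot hσroot hwf hi hii
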